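/- Let F ⊆ E and let e ∈ F \ Ch_D(F). Then there exists a circuit C of M_D such that e ∈ C, C - e ⊆ Ch_D(F), and f ≻_D e for every element f ∈ C - e. -/

import Mathlib

variable {α : Type*}

/-- The rank (in `ℕ∞`) of a subset `X`: the largest size of an independent subset
of `X`. -/
noncomputable def erank (M : Matroid α) (X : Set α) : ℕ∞ :=
  ⨆ I ∈ {I : Set α | M.Indep I ∧ I ⊆ X}, I.encard

/-- A circuit of a matroid is an inclusion-wise minimal dependent set. -/
def Matroid.IsCircuit' (M : Matroid α) (C : Set α) : Prop :=
  M.Dep C ∧ ∀ ⦃D : Set α⦄, D ⊂ C → M.Indep D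

/-- The union of the levels `T 0, …, T (s-1)`. -/
def prevT (T : ℕ → Set α) (s : ℕ) : Set α := ⋃ j ∈ Finset.range s, T j

/-- The `≽`-maximal elements of `X`. -/
def heads (pref : α → α → Prop) (X : Set α) : Set α := {e ∈ X | ∀ f ∈ X, pref e f}

/-- The `≽`-minimal elements of `X`. -/
def tails (pref : α → α → Prop) (X : Set α) : Set α := {e ∈ X | ∀ f ∈ X, pref f e}

/-- `e ≻ f`: strict preference. -/
def SPref (pref : α → α → Prop) (e f : α) : Prop := pref e f ∧ ¬ pref f e

/-- The level decomposition of `F` produced by Algorithm 1: each level `T s`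
consists of the `≽`-maximal elements of what remains of `F` after removing the
earlier levels, and the levels exhaust `F`. -/
def IsLevels (pref : α → α → Prop) (F : Set α) (k : ℕ) (T : ℕ → Set α) : Prop :=
  prevT T k = F ∧ ∀ s < k, T s = heads pref (F \ prevT T s)

/-- Independence in the chain-decomposition matroid `M⟨F⟩` (the direct sum of the
minors `M_s = (M|(T 0 ∪ ⋯ ∪ T s)) / (T 0 ∪ ⋯ ∪ T (s-1))`): `I ⊆ F` and each
block `I ∩ T s` is independent in `M_s`, i.e. satisfies the contraction rank
condition `rk((I ∩ T s) ∪ prevT s) = rk(prevT s) + |I ∩ T s|`. -/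
def ChainIndep (M : Matroid α) (k : ℕ) (T : ℕ → Set α) (I : Set α) : Prop :=
  I ⊆ prevT T k ∧
  ∀ s < k, erank M ((I ∩ T s) ∪ prevT T s) = erank M (prevT T s) + (I ∩ T s).encard

/-- A base of the chain-decomposition matroid: a maximal independent set. -/
def ChainBase (M : Matroid α) (k : ℕ) (T : ℕ → Set α) (B : Set α) : Prop :=
  ChainIndep M k T B ∧ ∀ J : Set α, ChainIndep M k T J → B ⊆ J → J = B

/-- A circuit of the chain-decomposition matroid: a minimal dependent set. -/
def ChainCircuit (M : Matroid α) (k : ℕ) (T : ℕ → Set α) (C : Set α) : Prop :=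
  C ⊆ prevT T k ∧ ¬ ChainIndep M k T C ∧ ∀ ⦃D : Set α⦄, D ⊂ C → ChainIndep M k T D

/-- The greedy choice set `Ch(F)` (Algorithm 3): an element `e` of the level `T s`
belongs to `Ch(F)` iff `{e}` is independent in the contraction of `M` by the
earlier levels `T 0 ∪ ⋯ ∪ T (s-1)`. -/
def chooseSet (M : Matroid α) (k : ℕ) (T : ℕ → Set α) : Set α :=
  {e | ∃ s < k, e ∈ T s ∧ erank M ({e} ∪ prevT T s) = erank M (prevT T s) + 1}

/-!
An element of a level that is not chosen lies in the closure of the earlier levels, so by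
induction on the levels the chosen elements of the first `s` levels span all of them. Hence
`e ∈ T s \ Ch(F)` lies in the closure of the chosen elements of the levels before `s`, and a
circuit through `e` inside that set plus `e` consists, apart from `e`, of chosen elements of
strictly earlier levels, which are strictly preferred to `e`.
-/

open Set

lemma erank_eq_eRk (M : Matroid α) (X : Set α) : erank M X = M.eRk X := by
  refine le_antisymm (iSup₂_le fun I hI => hI.1.encard_le_eRk_of_subset hI.2) ?_
  obtain ⟨I, hI⟩ := M.exists_isBasis' X
  rw [← hI.encard_eq_eRk]
  exact le_iSup₂_of_le I ⟨hI.indep, hI.subset⟩ le_rfl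

lemma Matroid.IsCircuit.isCircuit' {M : Matroid α} {C : Set α} (hC : M.IsCircuit C) :
    M.IsCircuit' C :=
  Matroid.isCircuit_iff_forall_ssubset.1 hC

section prevT

variable (T : ℕ → Set α) {e : α} {s t : ℕ}

lemma mem_prevT : e ∈ prevT T s ↔ ∃ j < s, e ∈ T j := by
  simp [prevT]

lemma prevT_zero : prevT T 0 = ∅ := by
  simp [prevT]

lemma prevT_succ (s : ℕ) : prevT T (s + 1) = prevT T s ∪ T s := by
  simp [prevT, Finset.range_add_one, union_comm]

lemma prevT_mono (h : s ≤ t) : prevT T s ⊆ prevT T t :=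
  biUnion_subset_biUnion_left (by exact_mod_cast Finset.range_subset_range.mpr h)

lemma subset_prevT (h : s < t) : T s ⊆ prevT T t :=
  subset_biUnion_of_mem (u := T) (Finset.mem_range.mpr h)

end prevT

lemma mem_closure_prevT_of_notMem_chooseSet {M : Matroid α} {k s : ℕ} {T : ℕ → Set α} {e : α}
    (hs : s < k) (heT : e ∈ T s) (heE : e ∈ M.E) (he : e ∉ chooseSet M k T) :
    e ∈ M.closure (prevT T s) := by
  by_contra hcl
  refine he ⟨s, hs, heT, ?_⟩
  rw [erank_eq_eRk, erank_eq_eRk, singleton_union]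
  exact M.eRk_insert_eq_add_one ⟨heE, hcl⟩

namespace IsLevels

variable {M : Matroid α} {pref : α → α → Prop} {F : Set α} {k : ℕ} {T : ℕ → Set α} {e f : α}
  {j s : ℕ}

lemma exists_lt_mem (hT : IsLevels pref F k T) (he : e ∈ F) : ∃ s < k, e ∈ T s :=
  (mem_prevT T).1 (hT.1 ▸ he)

lemma prevT_subset (hT : IsLevels pref F k T) (hs : s ≤ k) : prevT T s ⊆ F :=
  hT.1 ▸ prevT_mono T hs

lemma notMem_prevT (hT : IsLevels pref F k T) (hs : s < k) (he : e ∈ T s) :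
    e ∉ prevT T s := by
  rw [hT.2 s hs] at he
  exact he.1.2

lemma sPref_of_lt (hT : IsLevels pref F k T) (htrans : Transitive pref) (hjs : j < s)
    (hsk : s < k) (hf : f ∈ T j) (he : e ∈ T s) : SPref pref f e := by
  have heF : e ∈ F \ prevT T j :=
    ⟨hT.prevT_subset le_rfl (subset_prevT T hsk he),
      fun h => hT.notMem_prevT hsk he (prevT_mono T hjs.le h)⟩
  have hTj := hT.2 j (hjs.trans hsk)
  rw [hTj] at hf
  refine ⟨hf.2 e heF, fun hef => hT.notMem_prevT hsk he (subset_prevT T hjs ?_)⟩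
  rw [hTj]
  exact ⟨heF, fun g hg => htrans hef (hf.2 g hg)⟩

lemma prevT_subset_closure_chooseSet (hT : IsLevels pref F k T) (hF : F ⊆ M.E) (hs : s ≤ k) :
    prevT T s ⊆ M.closure (chooseSet M k T ∩ prevT T s) := by
  induction s with
  | zero => simp [prevT_zero]
  | succ n ih =>
    have hmono : M.closure (chooseSet M k T ∩ prevT T n) ⊆
        M.closure (chooseSet M k T ∩ prevT T (n + 1)) :=
      M.closure_subset_closure (inter_subset_inter_right _ (prevT_mono T n.le_succ))
    intro f hf
    have hfE : f ∈ M.E := hF (hT.prevT_subset hs hf)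
    rw [prevT_succ] at hf
    rcases hf with hf | hf
    · exact hmono (ih (by omega) hf)
    by_cases hfc : f ∈ chooseSet M k T
    · exact M.mem_closure_of_mem' ⟨hfc, subset_prevT T n.lt_succ_self hf⟩ hfE
    · exact hmono <| M.closure_subset_closure_of_subset_closure (ih (by omega))
        (mem_closure_prevT_of_notMem_chooseSet (by omega) hf hfE hfc)

end IsLevels

theorem outside_chooseSet_general (M : Matroid α) (pref : α → α → Prop)
    (htrans : Transitive pref)
    (F : Set α) (hF : F ⊆ M.E) (k : ℕ) (T : ℕ → Set α)
    (hT : IsLevels pref F k T)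
    (e : α) (he : e ∈ F \ chooseSet M k T) :
    ∃ C : Set α, M.IsCircuit' C ∧ e ∈ C ∧ C \ {e} ⊆ chooseSet M k T ∧
      ∀ f ∈ C \ {e}, SPref pref f e := by
  obtain ⟨heF, hech⟩ := he
  obtain ⟨s, hsk, hes⟩ := hT.exists_lt_mem heF
  have heG : e ∈ M.closure (chooseSet M k T ∩ prevT T s) :=
    M.closure_subset_closure_of_subset_closure (hT.prevT_subset_closure_chooseSet hF hsk.le)
      (mem_closure_prevT_of_notMem_chooseSet hsk hes (hF heF) hech)
  obtain ⟨C, hCG, hC, heC⟩ := M.exists_isCircuit_of_mem_closure heG fun h => hech h.1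
  have hCeG : C \ {e} ⊆ chooseSet M k T ∩ prevT T s := sdiff_singleton_subset_iff.2 hCG
  refine ⟨C, hC.isCircuit', heC, fun f hf => (hCeG hf).1, fun f hf => ?_⟩
  obtain ⟨j, hjs, hfj⟩ := (mem_prevT T).1 (hCeG hf).2
  exact hT.sPref_of_lt htrans hjs hsk hfj hes

/-- Lemma 14: for every `e ∈ F \ Ch(F)` there exists a circuit `C` of `M` with
`e ∈ C`, `C - e ⊆ Ch(F)`, and `f ≻ e` for every `f ∈ C - e`. -/
theorem outside_chooseSet (M : Matroid α) (pref : α → α → Prop)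
    (htrans : Transitive pref)
    (htotal : ∀ e ∈ M.E, ∀ f ∈ M.E, pref e f ∨ pref f e)
    (hsingle : ∀ e ∈ M.E, M.Indep {e})
    (F : Set α) (hF : F ⊆ M.E) (k : ℕ) (T : ℕ → Set α)
    (hT : IsLevels pref F k T)
    (e : α) (he : e ∈ F \ chooseSet M k T) :
    ∃ C : Set α, M.IsCircuit' C ∧ e ∈ C ∧ C \ {e} ⊆ chooseSet M k T ∧
      ∀ f ∈ C \ {e}, SPref pref f e :=
  outside_chooseSet_general M pref htrans F hF k T hT e he
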